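/- arXiv:2107.00889 — 3 statements merged into one kernel-verified Lean document; each statement's English description precedes it below -/
import Mathlib

section
/- Let p be a prime, α > 0 a real number, n an integer, and a ∈ ℚ_p with |a|_p = p^n. Then the integral of |x - a|_p^{α-1} over the sphere {x : |x|_p = p^n} with respect to the normalized Haar measure equals ((p - 2 + p^{-α})/(p(1 - p^{-α}))) · |a|_p^α. -/
open MeasureTheory Topology Filter

noncomputable instance (p : ℕ) [Fact p.Prime] : MeasurableSpace ℚ_[p] := borel _
instance (p : ℕ) [Fact p.Prime] : BorelSpace ℚ_[p] := ⟨rfl⟩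

/-- The closed unit ball of `ℚ_[p]` as a positive compact set. -/
noncomputable def padicUnitBall (p : ℕ) [Fact p.Prime] :
    TopologicalSpace.PositiveCompacts ℚ_[p] where
  carrier := {x : ℚ_[p] | ‖x‖ ≤ 1}
  isCompact' := by
    have h : {x : ℚ_[p] | ‖x‖ ≤ 1} = Metric.closedBall 0 1 := by
      ext x; simp [dist_eq_norm]
    rw [h]
    exact isCompact_closedBall 0 1
  interior_nonempty' := by
    refine ⟨0, ?_⟩
    have h : Metric.ball (0 : ℚ_[p]) 1 ⊆ {x : ℚ_[p] | ‖x‖ ≤ 1} := by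
      intro x hx
      simp only [Metric.mem_ball, dist_eq_norm, sub_zero] at hx
      exact le_of_lt hx
    exact interior_maximal h Metric.isOpen_ball (Metric.mem_ball_self one_pos)

/-- The Haar measure on `ℚ_[p]`, normalized so that `ℤ_[p]` has measure 1. -/
noncomputable def padicHaar (p : ℕ) [Fact p.Prime] : Measure ℚ_[p] :=
  Measure.addHaarMeasure (padicUnitBall p)
/-!
Since `‖a‖ = p ^ n`, the sphere `‖x‖ = p ^ n` splits into the ball `‖x - a‖ < p ^ n`, which is
`‖x - a‖ ≤ p ^ (n - 1)`, and the rest, where the ultrametric inequality forces `‖x - a‖ = p ^ n`.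
On the rest the integrand is constant. After translating by `a`, the integral over the ball is
a sum over the spheres `‖x‖ = p ^ (n - 1 - k)`, `k ≥ 0`: a geometric series of ratio `p ^ (-α)`.
Everything rests on `μ (‖x‖ ≤ p ^ m) = p ^ m`, which holds because the ball of radius `p ^ (m + 1)`
is the disjoint union of the `p` translates of the ball of radius `p ^ m` by the digits
`j * p ^ (-(m + 1))`, `0 ≤ j < p`.
-/

open Metric Function

lemma Real.zpow_sub_natCast_rpow {q : ℝ} (hq : 0 < q) (m : ℤ) (k : ℕ) (α : ℝ) :
    (q ^ (m - k)) ^ α = (q ^ m) ^ α * (q ^ (-α)) ^ k := by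
  rw [zpow_sub₀ hq.ne', zpow_natCast, div_eq_mul_inv,
    Real.mul_rpow (zpow_nonneg hq.le _) (inv_nonneg.mpr (pow_nonneg hq.le _)),
    Real.inv_rpow (pow_nonneg hq.le _), ← Real.rpow_pow_comm hq.le, Real.rpow_neg hq.le, inv_pow]

namespace IsUltrametricDist

variable {X : Type*} [PseudoMetricSpace X] [IsUltrametricDist X] (x y : X)

lemma ball_dist_subset_sphere : ball y (dist x y) ⊆ sphere x (dist x y) := fun z hz => by
  rw [mem_sphere, dist_eq_max_of_dist_ne_dist z y x (dist_comm x y ▸ hz.ne),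
    max_eq_right (dist_comm x y ▸ hz.le), dist_comm]

lemma sphere_dist_sdiff_ball_subset_sphere :
    sphere x (dist x y) \ ball y (dist x y) ⊆ sphere y (dist x y) := fun z ⟨hzx, hzy⟩ =>
  le_antisymm ((dist_triangle_max z x y).trans (max_le (mem_sphere.mp hzx).le le_rfl))
    (not_lt.mp hzy)

end IsUltrametricDist

lemma setLIntegral_ball_comp_sub {E : Type*} [NormedAddCommGroup E] [MeasurableSpace E]
    [BorelSpace E] (μ : Measure E) [μ.IsAddRightInvariant] (f : E → ENNReal) (a : E) (r : ℝ) :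
    ∫⁻ x in ball a r, f (x - a) ∂μ = ∫⁻ x in ball 0 r, f x ∂μ := by
  have : (· - a) ⁻¹' ball 0 r = ball a r := by ext; simp [dist_eq_norm]
  rw [← this, (measurePreserving_sub_right μ a).setLIntegral_comp_preimage_emb
    (measurableEmbedding_subRight a)]

namespace Padic

variable {p : ℕ} [hp : Fact p.Prime]

lemma exists_lt_norm_sub_natCast_lt_one {x : ℚ_[p]} (hx : ‖x‖ ≤ 1) :
    ∃ j < p, ‖x - j‖ < 1 := by
  obtain ⟨j, hjp, hj⟩ := PadicInt.exists_mem_range (⟨x, hx⟩ : ℤ_[p])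
  rw [IsLocalRing.mem_maximalIdeal, PadicInt.mem_nonunits, PadicInt.norm_def] at hj
  exact ⟨j, hjp, hj⟩

lemma norm_natCast_sub_natCast_eq_one {i j : ℕ} (hi : i < p) (hj : j < p) (hij : i ≠ j) :
    ‖(i - j : ℚ_[p])‖ = 1 := by
  have hndvd : ¬ (p : ℤ) ∣ (i - j : ℤ) := fun h =>
    hij (by have := Int.eq_zero_of_abs_lt_dvd h (by rw [abs_lt]; omega); omega)
  have := (norm_intCast_lt_one_iff (p := p) (k := i - j)).not.mpr hndvd
  push_cast at this
  exact le_antisymm (by exact_mod_cast norm_int_le_one (p := p) (i - j)) (not_lt.mp this)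

lemma closedBall_zpow_add_one_eq_iUnion (m : ℤ) :
    closedBall (0 : ℚ_[p]) ((p : ℝ) ^ (m + 1)) =
      ⋃ j : Fin p, closedBall ((j : ℚ_[p]) * (p : ℚ_[p]) ^ (-(m + 1))) ((p : ℝ) ^ m) := by
  set u : ℚ_[p] := (p : ℚ_[p]) ^ (-(m + 1))
  have hu : ‖u‖ = (p : ℝ) ^ (m + 1) := by rw [norm_p_zpow, neg_neg]
  have hu0 : u ≠ 0 := norm_pos_iff.mp (hu ▸ zpow_pos (by exact_mod_cast hp.out.pos) _)
  have hp1 : (1 : ℝ) < p := by exact_mod_cast hp.out.one_lt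
  refine subset_antisymm (fun x hx => ?_) (Set.iUnion_subset fun j => ?_)
  · rw [mem_closedBall_zero_iff] at hx
    obtain ⟨j, hjp, hj⟩ := exists_lt_norm_sub_natCast_lt_one (x := x / u)
      (by rw [norm_div, hu, div_le_one (zpow_pos (by positivity) _)]; exact hx)
    refine Set.mem_iUnion.mpr ⟨⟨j, hjp⟩, ?_⟩
    rw [← zpow_zero (p : ℝ), norm_lt_pow_iff_norm_le_pow_sub_one, zero_sub] at hj
    calc dist x (j * u) = ‖x / u - j‖ * ‖u‖ := by
          rw [dist_eq_norm, ← norm_mul, sub_mul, div_mul_cancel₀ _ hu0]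
      _ ≤ (p : ℝ) ^ (-1 : ℤ) * (p : ℝ) ^ (m + 1) := by rw [hu]; gcongr
      _ = (p : ℝ) ^ m := by rw [← zpow_add₀ (by positivity)]; ring_nf
  · have hju : (j : ℚ_[p]) * u ∈ closedBall 0 ((p : ℝ) ^ (m + 1)) := by
      rw [mem_closedBall_zero_iff, norm_mul, hu]
      exact mul_le_of_le_one_left (by positivity) (IsUltrametricDist.norm_natCast_le_one _ j)
    rw [IsUltrametricDist.closedBall_eq_of_mem hju]
    exact closedBall_subset_closedBall (zpow_le_zpow_right₀ hp1.le (by omega))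

lemma pairwise_disjoint_closedBall_natCast_mul_zpow (m : ℤ) :
    Pairwise (Disjoint on
      fun j : Fin p => closedBall ((j : ℚ_[p]) * (p : ℚ_[p]) ^ (-(m + 1))) ((p : ℝ) ^ m)) := by
  intro i j hij
  refine (IsUltrametricDist.closedBall_eq_or_disjoint _ _ _).resolve_left fun h => ?_
  have hmem := h ▸ mem_closedBall_self (x := (i : ℚ_[p]) * (p : ℚ_[p]) ^ (-(m + 1)))
    (zpow_nonneg (Nat.cast_nonneg p) m)
  rw [mem_closedBall, dist_eq_norm, ← sub_mul, norm_mul, norm_p_zpow, neg_neg,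
    norm_natCast_sub_natCast_eq_one i.isLt j.isLt (Fin.val_ne_of_ne hij), one_mul] at hmem
  exact absurd hmem (not_le.mpr (zpow_lt_zpow_right₀ (by exact_mod_cast hp.out.one_lt) (by omega)))

lemma measure_closedBall_zpow_add_one (μ : Measure ℚ_[p]) [μ.IsAddHaarMeasure] (m : ℤ) :
    μ (closedBall 0 ((p : ℝ) ^ (m + 1))) = p * μ (closedBall 0 ((p : ℝ) ^ m)) := by
  rw [closedBall_zpow_add_one_eq_iUnion, measure_iUnion
    (pairwise_disjoint_closedBall_natCast_mul_zpow m) (fun _ => measurableSet_closedBall)]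
  simp only [Measure.addHaar_closedBall_center, tsum_fintype, Finset.sum_const, Finset.card_univ,
    Fintype.card_fin, nsmul_eq_mul]

lemma closedBall_zpow_sub_one (c : ℚ_[p]) (m : ℤ) :
    closedBall c ((p : ℝ) ^ (m - 1)) = ball c ((p : ℝ) ^ m) := by
  ext x
  simp only [mem_closedBall, mem_ball, dist_eq_norm, norm_lt_pow_iff_norm_le_pow_sub_one]

lemma closedBall_zero_sdiff_zero (m : ℤ) :
    closedBall (0 : ℚ_[p]) ((p : ℝ) ^ m) \ {0} = ⋃ k : ℕ, sphere 0 ((p : ℝ) ^ (m - k)) := by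
  ext x
  simp only [Set.mem_sdiff, mem_closedBall_zero_iff, Set.mem_singleton_iff, Set.mem_iUnion,
    mem_sphere_zero_iff_norm]
  constructor
  · rintro ⟨hx, hx0⟩
    rw [norm_eq_zpow_neg_valuation hx0] at hx ⊢
    have := (zpow_le_zpow_iff_right₀ (by exact_mod_cast hp.out.one_lt : (1 : ℝ) < p)).mp hx
    exact ⟨(m + x.valuation).toNat, by congr 1; omega⟩
  · rintro ⟨k, hk⟩
    refine ⟨hk ▸ zpow_le_zpow_right₀ (by exact_mod_cast hp.out.one_le) (by omega), ?_⟩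
    rintro rfl
    exact (zpow_pos (by exact_mod_cast hp.out.pos : (0 : ℝ) < p) _).ne (by simpa using hk)

lemma pairwise_disjoint_sphere_zpow_sub (m : ℤ) :
    Pairwise (Disjoint on fun k : ℕ => sphere (0 : ℚ_[p]) ((p : ℝ) ^ (m - k))) := by
  intro i j hij
  refine Set.disjoint_left.mpr fun x hi hj => hij ?_
  rw [mem_sphere] at hi hj
  have := zpow_right_injective₀ (by exact_mod_cast hp.out.pos : (0 : ℝ) < p)
    (by exact_mod_cast hp.out.one_lt.ne') (hi.symm.trans hj)
  omega

lemma one_sub_inv_natCast_nonneg : 0 ≤ 1 - (p : ℝ)⁻¹ :=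
  sub_nonneg.mpr (inv_le_one_of_one_le₀ (by exact_mod_cast hp.out.one_le))

lemma natCast_rpow_neg_lt_one {α : ℝ} (hα : 0 < α) : (p : ℝ) ^ (-α) < 1 :=
  Real.rpow_lt_one_of_one_lt_of_neg (by exact_mod_cast hp.out.one_lt) (neg_neg_of_pos hα)

end Padic

section PadicHaar

open Padic

variable {p : ℕ} [hp : Fact p.Prime]

instance : (padicHaar p).IsAddHaarMeasure := by
  unfold padicHaar; infer_instance

lemma padicHaar_closedBall (c : ℚ_[p]) (m : ℤ) :
    padicHaar p (closedBall c ((p : ℝ) ^ m)) = ENNReal.ofReal ((p : ℝ) ^ m) := by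
  rw [Measure.addHaar_closedBall_center]
  have hp0 : (p : ENNReal) ≠ 0 := by exact_mod_cast hp.out.ne_zero
  have hstep (k : ℤ) :
      ENNReal.ofReal ((p : ℝ) ^ (k + 1)) = p * ENNReal.ofReal ((p : ℝ) ^ k) := by
    rw [zpow_add_one₀ (by exact_mod_cast hp.out.ne_zero), mul_comm,
      ENNReal.ofReal_mul (Nat.cast_nonneg p), ENNReal.ofReal_natCast]
  induction m using Int.induction_on with
  | zero =>
    have : closedBall (0 : ℚ_[p]) 1 = padicUnitBall p := by
      ext x; simp only [mem_closedBall_zero_iff]; rfl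
    rw [zpow_zero, this, ENNReal.ofReal_one]
    exact Measure.addHaarMeasure_self
  | succ k ih => rw [measure_closedBall_zpow_add_one, ih, hstep]
  | pred k ih =>
    have h := measure_closedBall_zpow_add_one (padicHaar p) (-k - 1)
    rw [sub_add_cancel, ih, ← sub_add_cancel (-(k : ℤ)) 1, hstep, sub_add_cancel] at h
    exact ((ENNReal.mul_right_inj hp0 (ENNReal.natCast_ne_top p)).mp h).symm

lemma padicHaar_sphere (c : ℚ_[p]) (m : ℤ) :
    padicHaar p (sphere c ((p : ℝ) ^ m)) = ENNReal.ofReal ((p : ℝ) ^ m - (p : ℝ) ^ (m - 1)) := by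
  have hsub : closedBall c ((p : ℝ) ^ (m - 1)) ⊆ closedBall c ((p : ℝ) ^ m) :=
    closedBall_subset_closedBall (zpow_le_zpow_right₀ (by exact_mod_cast hp.out.one_le) (by omega))
  rw [← closedBall_sdiff_ball, ← closedBall_zpow_sub_one, measure_sdiff hsub
    measurableSet_closedBall.nullMeasurableSet (by simp [padicHaar_closedBall]),
    padicHaar_closedBall, padicHaar_closedBall, ENNReal.ofReal_sub _ (by positivity)]

lemma setLIntegral_sphere_norm_rpow (α : ℝ) (m : ℤ) (k : ℕ) :
    ∫⁻ x in sphere (0 : ℚ_[p]) ((p : ℝ) ^ (m - k)), ENNReal.ofReal (‖x‖ ^ (α - 1)) ∂padicHaar p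
      = ENNReal.ofReal (((p : ℝ) ^ m) ^ α * (1 - (p : ℝ)⁻¹) * ((p : ℝ) ^ (-α)) ^ k) := by
  have hp0 : (0 : ℝ) < p := by exact_mod_cast hp.out.pos
  rw [setLIntegral_congr_fun isClosed_sphere.measurableSet
      fun x hx => by rw [mem_sphere_zero_iff_norm.mp hx],
    setLIntegral_const, padicHaar_sphere, ← ENNReal.ofReal_mul (by positivity),
    mul_right_comm _ (1 - _), ← Real.zpow_sub_natCast_rpow hp0, zpow_sub_one₀ hp0.ne',
    Real.rpow_sub_one (zpow_pos hp0 _).ne']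
  congr 1
  field_simp

lemma setLIntegral_closedBall_norm_rpow {α : ℝ} (hα : 0 < α) (m : ℤ) :
    ∫⁻ x in closedBall (0 : ℚ_[p]) ((p : ℝ) ^ m), ENNReal.ofReal (‖x‖ ^ (α - 1)) ∂padicHaar p
      = ENNReal.ofReal (((p : ℝ) ^ m) ^ α * (1 - (p : ℝ)⁻¹) / (1 - (p : ℝ) ^ (-α))) := by
  have ht0 : 0 ≤ (p : ℝ) ^ (-α) := by positivity
  have ht1 := natCast_rpow_neg_lt_one (p := p) hα
  have hc : 0 ≤ ((p : ℝ) ^ m) ^ α * (1 - (p : ℝ)⁻¹) :=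
    mul_nonneg (by positivity) one_sub_inv_natCast_nonneg
  rw [← setLIntegral_congr (sdiff_null_ae_eq_self (measure_singleton 0)),
    closedBall_zero_sdiff_zero, lintegral_iUnion (fun _ => isClosed_sphere.measurableSet)
      (pairwise_disjoint_sphere_zpow_sub m)]
  simp_rw [setLIntegral_sphere_norm_rpow]
  rw [← ENNReal.ofReal_tsum_of_nonneg (fun k => mul_nonneg hc (pow_nonneg ht0 k))
      ((summable_geometric_of_lt_one ht0 ht1).mul_left _),
    tsum_mul_left, tsum_geometric_of_lt_one ht0 ht1, div_eq_mul_inv]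

lemma setLIntegral_sphere_norm_sub_rpow {α : ℝ} (hα : 0 < α) {n : ℤ} {a : ℚ_[p]}
    (ha : ‖a‖ = (p : ℝ) ^ n) :
    ∫⁻ x in sphere 0 ((p : ℝ) ^ n), ENNReal.ofReal (‖x - a‖ ^ (α - 1)) ∂padicHaar p
      = ENNReal.ofReal (((p : ℝ) ^ (n - 1)) ^ α * (1 - (p : ℝ)⁻¹) / (1 - (p : ℝ) ^ (-α)))
        + ENNReal.ofReal (((p : ℝ) ^ n) ^ (α - 1))
          * (ENNReal.ofReal ((p : ℝ) ^ n - (p : ℝ) ^ (n - 1))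
            - ENNReal.ofReal ((p : ℝ) ^ (n - 1))) := by
  have hdist : dist 0 a = (p : ℝ) ^ n := by rw [dist_zero_left, ha]
  have hball := IsUltrametricDist.ball_dist_subset_sphere 0 a
  have hrest := IsUltrametricDist.sphere_dist_sdiff_ball_subset_sphere 0 a
  rw [hdist] at hball hrest
  have hmeas : MeasurableSet (sphere 0 ((p : ℝ) ^ n) \ ball a ((p : ℝ) ^ n)) :=
    isClosed_sphere.measurableSet.diff measurableSet_ball
  rw [← Set.union_sdiff_cancel hball, lintegral_union hmeas Set.disjoint_sdiff_right,
    setLIntegral_ball_comp_sub _ (fun y => ENNReal.ofReal (‖y‖ ^ (α - 1))),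
    ← closedBall_zpow_sub_one, setLIntegral_closedBall_norm_rpow hα,
    setLIntegral_congr_fun hmeas fun x hx => by rw [← dist_eq_norm, mem_sphere.mp (hrest hx)],
    setLIntegral_const, measure_sdiff hball measurableSet_ball.nullMeasurableSet
      measure_ball_lt_top.ne, padicHaar_sphere, ← closedBall_zpow_sub_one, padicHaar_closedBall]

end PadicHaar

lemma Real.zpow_sub_one_rpow_add_eq {q α : ℝ} (hq : 0 < q) (hqα : q ^ (-α) ≠ 1) (n : ℤ) :
    (q ^ (n - 1)) ^ α * (1 - q⁻¹) / (1 - q ^ (-α))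
        + (q ^ n) ^ (α - 1) * (q ^ n - q ^ (n - 1) - q ^ (n - 1))
      = (q - 2 + q ^ (-α)) / (q * (1 - q ^ (-α))) * (q ^ n) ^ α := by
  have h1 := Real.zpow_sub_natCast_rpow hq n 1 α
  rw [Nat.cast_one, pow_one] at h1
  have hqn : 0 < q ^ n := zpow_pos hq n
  have ht : 1 - q ^ (-α) ≠ 0 := sub_ne_zero.mpr hqα.symm
  rw [h1, Real.rpow_sub_one hqn.ne', zpow_sub_one₀ hq.ne']
  field_simp
  ring

theorem stmt1 (p : ℕ) [Fact p.Prime] (α : ℝ) (hα : 0 < α) (n : ℤ) (a : ℚ_[p])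
    (ha : ‖a‖ = (p : ℝ) ^ n) :
    ∫ x in {x : ℚ_[p] | ‖x‖ = (p : ℝ) ^ n}, ‖x - a‖ ^ (α - 1) ∂(padicHaar p)
      = (((p : ℝ) - 2 + (p : ℝ) ^ (-α)) / ((p : ℝ) * (1 - (p : ℝ) ^ (-α)))) * ‖a‖ ^ α := by
  have hp0 : (0 : ℝ) < p := by exact_mod_cast (Fact.out : p.Prime).pos
  have hp2 : (2 : ℝ) ≤ p := by exact_mod_cast (Fact.out : p.Prime).two_le
  have ht1 := Padic.natCast_rpow_neg_lt_one (p := p) hα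
  have hpn : 2 * (p : ℝ) ^ (n - 1) ≤ (p : ℝ) ^ n := by
    rw [zpow_sub_one₀ hp0.ne', ← div_eq_mul_inv, mul_div_assoc', div_le_iff₀ hp0]
    nlinarith [zpow_pos hp0 n]
  have hball : 0 ≤ ((p : ℝ) ^ (n - 1)) ^ α * (1 - (p : ℝ)⁻¹) / (1 - (p : ℝ) ^ (-α)) :=
    div_nonneg (mul_nonneg (by positivity) Padic.one_sub_inv_natCast_nonneg) (by linarith)
  have hrest :
      0 ≤ ((p : ℝ) ^ n) ^ (α - 1) * ((p : ℝ) ^ n - (p : ℝ) ^ (n - 1) - (p : ℝ) ^ (n - 1)) :=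
    mul_nonneg (by positivity) (by linarith)
  have hS : {x : ℚ_[p] | ‖x‖ = (p : ℝ) ^ n} = sphere 0 ((p : ℝ) ^ n) := by ext; simp
  rw [hS, integral_eq_lintegral_of_nonneg_ae (ae_of_all _ fun _ => by positivity)
      (by fun_prop : Measurable fun x : ℚ_[p] => ‖x - a‖ ^ (α - 1)).aestronglyMeasurable,
    setLIntegral_sphere_norm_sub_rpow hα ha, ← ENNReal.ofReal_sub _ (by positivity),
    ← ENNReal.ofReal_mul (by positivity), ← ENNReal.ofReal_add hball hrest,
    ENNReal.toReal_ofReal (add_nonneg hball hrest), ha,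
    Real.zpow_sub_one_rpow_add_eq hp0 ht1.ne n]
end

section
/- Let p be a prime and 0 < α < 1. Define c_α = (1 - p^α)/(1 - p^{-α-1}), d_α = (1 - p^{-α})/(1 - p^{α-1}), and define R : ℚ_p → ℝ by R(τ) = 1 - (1 - 1/p)·(1/(1 - p^{-α}))·|τ|_p^{α-1} for 0 ≠ |τ|_p < 1 and R(τ) = 0 for |τ|_p ≥ 1. Then the integral of c_α·d_α·R(τ) over ℚ_p with respect to the normalized Haar measure equals 1. -/
/-!
Off the null set `{0}`, the integrand vanishes outside the open unit ball and is
`c (1 - C ‖τ‖ ^ (α - 1))` on it. The ball minus `0` is the disjoint union of the spheres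
`‖τ‖ = p⁻ⁿ`, `n ≥ 1`, of measure `(1 - p⁻¹) p⁻ⁿ`: the closed ball of radius `p⁻ⁿ` has measure
`p⁻ⁿ` because `p ^ n` disjoint translates of it (centred at `0, …, p ^ n - 1`) tile `ℤ_[p]`.
Summing a geometric series, `∫_{‖τ‖ < 1} ‖τ‖ ^ s = (1 - p⁻¹) p^{-(s+1)} / (1 - p^{-(s+1)})` for
`s > -1`; with `s = 0` and `s = α - 1` the claim becomes a rational identity in `p ^ α` and `p⁻¹`.
-/

open MeasureTheory Topology Filter

open Metric
open scoped ENNReal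

namespace Padic

variable {p : ℕ} [Fact p.Prime]

instance isAddHaarMeasure_padicHaar : (padicHaar p).IsAddHaarMeasure :=
  Measure.isAddHaarMeasure_addHaarMeasure _

variable (p) in
lemma one_lt_natCast_prime : (1 : ℝ) < p := mod_cast (Fact.out : p.Prime).one_lt

variable (p) in
lemma natCast_prime_pos : (0 : ℝ) < p := zero_lt_one.trans (one_lt_natCast_prime p)

lemma padicHaar_closedBall_zero_one : padicHaar p (closedBall 0 1) = 1 := by
  have h : closedBall (0 : ℚ_[p]) 1 = padicUnitBall p := by ext; simp; rfl
  rw [h]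
  exact Measure.addHaarMeasure_self

lemma exists_natCast_norm_sub_le {x : ℚ_[p]} (hx : ‖x‖ ≤ 1) (n : ℕ) :
    ∃ j < p ^ n, ‖x - j‖ ≤ (p : ℝ) ^ (-n : ℤ) := by
  set z : ℤ_[p] := ⟨x, hx⟩
  refine ⟨z.appr n, z.appr_lt n, ?_⟩
  have h := (z - z.appr n).norm_le_pow_iff_mem_span_pow n |>.mpr (z.appr_spec n)
  rwa [← PadicInt.padic_norm_e_of_padicInt, PadicInt.coe_sub, PadicInt.coe_natCast] at h

lemma natCast_eq_of_dist_le {i j n : ℕ} (hi : i < p ^ n) (hj : j < p ^ n)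
    (h : dist (i : ℚ_[p]) j ≤ (p : ℝ) ^ (-n : ℤ)) : i = j := by
  rw [dist_comm, dist_eq_norm, show ((j : ℚ_[p]) - i) = ((j - i : ℤ) : ℚ_[p]) by push_cast; rfl,
    norm_int_le_pow_iff_dvd] at h
  exact Nat.ModEq.eq_of_lt_of_lt (Nat.modEq_iff_dvd.mpr (mod_cast h)) hi hj

lemma closedBall_zero_one_eq_biUnion (n : ℕ) :
    closedBall (0 : ℚ_[p]) 1 =
      ⋃ j ∈ Finset.range (p ^ n), closedBall (j : ℚ_[p]) ((p : ℝ) ^ (-n : ℤ)) := by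
  ext x
  simp only [Set.mem_iUnion, Finset.mem_range, mem_closedBall, dist_eq_norm, sub_zero,
    exists_prop]
  refine ⟨fun hx ↦ exists_natCast_norm_sub_le hx n, fun ⟨j, _, hxj⟩ ↦ ?_⟩
  calc ‖x‖ = ‖(x - j) + j‖ := by rw [sub_add_cancel]
    _ ≤ max ‖x - j‖ ‖(j : ℚ_[p])‖ := nonarchimedean _ _
    _ ≤ 1 := max_le (hxj.trans (zpow_le_one_of_nonpos₀ (one_lt_natCast_prime p).le (by omega)))
        (norm_int_le_one j)

lemma padicHaar_closedBall_zero_zpow (n : ℕ) :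
    padicHaar p (closedBall 0 ((p : ℝ) ^ (-n : ℤ))) = ENNReal.ofReal ((p : ℝ) ^ (-n : ℤ)) := by
  have hdisj : (Finset.range (p ^ n) : Set ℕ).PairwiseDisjoint
      fun j ↦ closedBall (j : ℚ_[p]) ((p : ℝ) ^ (-n : ℤ)) := by
    intro i hi j hj hij
    refine Set.disjoint_left.mpr fun x hxi hxj ↦ hij (natCast_eq_of_dist_le
      (Finset.mem_range.mp hi) (Finset.mem_range.mp hj) ?_)
    exact (IsUltrametricDist.dist_triangle_max _ x _).trans
      (max_le (by rwa [dist_comm]) hxj)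
  have hcount : (p ^ n : ℕ) * padicHaar p (closedBall 0 ((p : ℝ) ^ (-n : ℤ))) = 1 := by
    rw [← padicHaar_closedBall_zero_one (p := p), closedBall_zero_one_eq_biUnion n,
      measure_biUnion_finset hdisj fun j _ ↦ measurableSet_closedBall]
    simp [Measure.addHaar_closedBall_center]
  rw [mul_comm] at hcount
  rw [ENNReal.eq_inv_of_mul_eq_one_left hcount, zpow_neg, zpow_natCast,
    ENNReal.ofReal_inv_of_pos (pow_pos (natCast_prime_pos p) n)]
  norm_cast

lemma padicHaar_sphere_zero_zpow (n : ℕ) :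
    padicHaar p (sphere 0 ((p : ℝ) ^ (-n : ℤ))) =
      ENNReal.ofReal ((1 - (p : ℝ)⁻¹) * (p : ℝ) ^ (-n : ℤ)) := by
  have hball : ball (0 : ℚ_[p]) ((p : ℝ) ^ (-n : ℤ)) =
      closedBall 0 ((p : ℝ) ^ (-(n + 1 : ℕ) : ℤ)) := by
    ext x
    rw [mem_ball_zero_iff, mem_closedBall_zero_iff, norm_lt_pow_iff_norm_le_pow_sub_one]
    push_cast; ring_nf
  rw [← closedBall_sdiff_ball,
    measure_sdiff ball_subset_closedBall measurableSet_ball.nullMeasurableSet measure_ball_lt_top.ne,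
    hball, padicHaar_closedBall_zero_zpow, padicHaar_closedBall_zero_zpow,
    ← ENNReal.ofReal_sub _ (zpow_pos (natCast_prime_pos p) _).le]
  congr 1
  push_cast
  rw [neg_add, zpow_add₀ (natCast_prime_pos p).ne', zpow_neg_one]
  ring

lemma ball_zero_one_sdiff_zero_eq_iUnion_sphere :
    ball (0 : ℚ_[p]) 1 \ {0} = ⋃ n : ℕ, sphere 0 ((p : ℝ) ^ (-(n + 1 : ℕ) : ℤ)) := by
  have hp := one_lt_natCast_prime p
  ext x
  simp only [Set.mem_sdiff, mem_ball_zero_iff, Set.mem_singleton_iff, Set.mem_iUnion,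
    mem_sphere_zero_iff_norm]
  constructor
  · rintro ⟨hx1, hx0⟩
    rw [norm_eq_zpow_neg_valuation hx0] at hx1 ⊢
    have hv : 0 < x.valuation := by
      rw [zpow_lt_one_iff_right₀ hp] at hx1
      omega
    refine ⟨(x.valuation - 1).toNat, ?_⟩
    congr 1
    omega
  · rintro ⟨n, hx⟩
    refine ⟨hx ▸ zpow_lt_one_of_neg₀ hp (by omega), fun hx0 ↦ ?_⟩
    rw [hx0, norm_zero] at hx
    exact (zpow_pos (natCast_prime_pos p) _).ne hx

lemma lintegral_ball_zero_one_comp_norm (f : ℝ → ℝ≥0∞) :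
    ∫⁻ x in ball 0 1, f ‖x‖ ∂padicHaar p =
      ∑' n : ℕ, f ((p : ℝ) ^ (-(n + 1 : ℕ) : ℤ)) *
        ENNReal.ofReal ((1 - (p : ℝ)⁻¹) * (p : ℝ) ^ (-(n + 1 : ℕ) : ℤ)) := by
  have hdisj : Pairwise (Function.onFun Disjoint
      fun n : ℕ ↦ sphere (0 : ℚ_[p]) ((p : ℝ) ^ (-(n + 1 : ℕ) : ℤ))) := by
    intro m n hmn
    refine Set.disjoint_left.mpr fun x hm hn ↦ hmn ?_
    rw [mem_sphere_zero_iff_norm] at hm hn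
    have := (zpow_right_strictMono₀ (one_lt_natCast_prime p)).injective (hm.symm.trans hn)
    omega
  rw [← Measure.restrict_congr_set (sdiff_null_ae_eq_self (measure_singleton 0)),
    ball_zero_one_sdiff_zero_eq_iUnion_sphere,
    lintegral_iUnion (fun _ ↦ isClosed_sphere.measurableSet) hdisj]
  refine tsum_congr fun n ↦ ?_
  rw [setLIntegral_congr_fun isClosed_sphere.measurableSet
      fun x hx ↦ by rw [mem_sphere_zero_iff_norm.mp hx],
    setLIntegral_const, padicHaar_sphere_zero_zpow]

lemma lintegral_ball_zero_one_norm_rpow {s : ℝ} (hs : -1 < s) :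
    ∫⁻ x in ball 0 1, ENNReal.ofReal (‖x‖ ^ s) ∂padicHaar p =
      ENNReal.ofReal ((1 - (p : ℝ)⁻¹) * ((p : ℝ) ^ (-(s + 1)) / (1 - (p : ℝ) ^ (-(s + 1))))) := by
  have hp0 := natCast_prime_pos p
  set ρ := (p : ℝ) ^ (-(s + 1))
  have hρ0 : 0 ≤ ρ := by positivity
  have hρ1 : ρ < 1 := Real.rpow_lt_one_of_one_lt_of_neg (one_lt_natCast_prime p) (by linarith)
  have hc : 0 ≤ 1 - (p : ℝ)⁻¹ := sub_nonneg.mpr (inv_le_one_of_one_le₀ (one_lt_natCast_prime p).le)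
  have hterm (m : ℕ) : ((p : ℝ) ^ (-m : ℤ)) ^ s * ((1 - (p : ℝ)⁻¹) * (p : ℝ) ^ (-m : ℤ)) =
      (1 - (p : ℝ)⁻¹) * ρ ^ m := by
    rw [← Real.rpow_intCast, ← Real.rpow_mul hp0.le, ← Real.rpow_natCast, ← Real.rpow_mul hp0.le]
    push_cast
    rw [mul_left_comm, ← Real.rpow_add hp0]
    ring_nf
  have hgeom : HasSum (fun n : ℕ ↦ (1 - (p : ℝ)⁻¹) * ρ ^ (n + 1))
      ((1 - (p : ℝ)⁻¹) * (ρ / (1 - ρ))) := by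
    refine HasSum.mul_left _ ?_
    simpa [pow_succ', div_eq_mul_inv] using (hasSum_geometric_of_lt_one hρ0 hρ1).mul_left ρ
  rw [lintegral_ball_zero_one_comp_norm fun t ↦ ENNReal.ofReal (t ^ s), ← hgeom.tsum_eq,
    ENNReal.ofReal_tsum_of_nonneg (fun n ↦ by positivity) hgeom.summable]
  refine tsum_congr fun n ↦ ?_
  rw [← ENNReal.ofReal_mul (by positivity), hterm]

lemma integrableOn_ball_zero_one_norm_rpow {s : ℝ} (hs : -1 < s) :
    IntegrableOn (fun x : ℚ_[p] ↦ ‖x‖ ^ s) (ball 0 1) (padicHaar p) := by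
  refine ⟨(measurable_norm.pow_const s).aestronglyMeasurable, ?_⟩
  rw [hasFiniteIntegral_iff_ofReal (ae_of_all _ fun x ↦ by positivity),
    lintegral_ball_zero_one_norm_rpow hs]
  exact ENNReal.ofReal_lt_top

lemma integral_ball_zero_one_norm_rpow {s : ℝ} (hs : -1 < s) :
    ∫ x in ball 0 1, ‖x‖ ^ s ∂padicHaar p =
      (1 - (p : ℝ)⁻¹) * ((p : ℝ) ^ (-(s + 1)) / (1 - (p : ℝ) ^ (-(s + 1)))) := by
  have hρ1 : (p : ℝ) ^ (-(s + 1)) < 1 :=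
    Real.rpow_lt_one_of_one_lt_of_neg (one_lt_natCast_prime p) (by linarith)
  have hc : 0 ≤ 1 - (p : ℝ)⁻¹ := sub_nonneg.mpr (inv_le_one_of_one_le₀ (one_lt_natCast_prime p).le)
  rw [integral_eq_lintegral_of_nonneg_ae (ae_of_all _ fun x ↦ by positivity)
    (measurable_norm.pow_const s).aestronglyMeasurable, lintegral_ball_zero_one_norm_rpow hs,
    ENNReal.toReal_ofReal (mul_nonneg hc (div_nonneg (by positivity) (by linarith)))]

end Padic

/-- With `q = p ^ α` and `r = p⁻¹`, the bracket is `∫ R`, assembled from the integrals of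
`‖τ‖ ^ 0` and `‖τ‖ ^ (α - 1)` over the open unit ball. -/
lemma normalizing_constant_identity {q r : ℝ} (hq : 1 < q) (hr : r < 1) (hqr : q * r < 1) :
    (1 - q) / (1 - q⁻¹ * r) * ((1 - q⁻¹) / (1 - q * r)) *
      ((1 - r) * (r / (1 - r)) - (1 - r) * (1 / (1 - q⁻¹)) * ((1 - r) * (q⁻¹ / (1 - q⁻¹)))) =
        1 := by
  have hq0 : q ≠ 0 := by positivity
  have hq1 : q - 1 ≠ 0 := sub_ne_zero.mpr hq.ne'
  have hqr' : q - r ≠ 0 := sub_ne_zero.mpr (hr.trans hq).ne'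
  have hr1 : 1 - r ≠ 0 := sub_ne_zero.mpr hr.ne'
  have hqr1 : 1 - q * r ≠ 0 := sub_ne_zero.mpr hqr.ne'
  rw [show 1 - q⁻¹ * r = (q - r) / q by field_simp, show 1 - q⁻¹ = (q - 1) / q by field_simp]
  field_simp
  ring

theorem stmt10 (p : ℕ) [Fact p.Prime] (α : ℝ) (hα0 : 0 < α) (hα1 : α < 1)
    (R : ℚ_[p] → ℝ)
    (hRlt : ∀ τ : ℚ_[p], τ ≠ 0 → ‖τ‖ < 1 →
      R τ = 1 - (1 - 1 / (p : ℝ)) * (1 / (1 - (p : ℝ) ^ (-α))) * ‖τ‖ ^ (α - 1))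
    (hRge : ∀ τ : ℚ_[p], 1 ≤ ‖τ‖ → R τ = 0) :
    ∫ τ : ℚ_[p],
        ((1 - (p : ℝ) ^ α) / (1 - (p : ℝ) ^ (-α - 1)))
          * ((1 - (p : ℝ) ^ (-α)) / (1 - (p : ℝ) ^ (α - 1))) * R τ ∂(padicHaar p) = 1 := by
  set c := (1 - (p : ℝ) ^ α) / (1 - (p : ℝ) ^ (-α - 1)) *
    ((1 - (p : ℝ) ^ (-α)) / (1 - (p : ℝ) ^ (α - 1)))
  set C := (1 - 1 / (p : ℝ)) * (1 / (1 - (p : ℝ) ^ (-α)))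
  have hR : (fun τ ↦ c * R τ) =ᵐ[padicHaar p]
      (ball 0 1).indicator fun τ ↦ c * (‖τ‖ ^ (0 : ℝ) - C * ‖τ‖ ^ (α - 1)) := by
    filter_upwards [Measure.ae_ne _ 0] with τ hτ
    by_cases h : ‖τ‖ < 1
    · rw [Set.indicator_of_mem (mem_ball_zero_iff.mpr h), hRlt τ hτ h, Real.rpow_zero]
    · rw [Set.indicator_of_notMem (by simpa using h), hRge τ (not_lt.mp h), mul_zero]
  have h0 : -1 < (0 : ℝ) := by norm_num
  have hα : -1 < α - 1 := by linarith
  rw [integral_congr_ae hR, integral_indicator measurableSet_ball, integral_const_mul,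
    integral_sub (Padic.integrableOn_ball_zero_one_norm_rpow h0)
      ((Padic.integrableOn_ball_zero_one_norm_rpow hα).const_mul C), integral_const_mul,
    Padic.integral_ball_zero_one_norm_rpow h0, Padic.integral_ball_zero_one_norm_rpow hα]
  have hp1 := Padic.one_lt_natCast_prime p
  have hpα : (p : ℝ) ^ (α - 1) = (p : ℝ) ^ α * (p : ℝ)⁻¹ := by
    rw [Real.rpow_sub_one (by positivity), div_eq_mul_inv]
  have hpα' : (p : ℝ) ^ (-α - 1) = ((p : ℝ) ^ α)⁻¹ * (p : ℝ)⁻¹ := by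
    rw [Real.rpow_sub_one (by positivity), Real.rpow_neg (by positivity), div_eq_mul_inv]
  simp only [c, C]
  rw [hpα, hpα', zero_add, Real.rpow_neg_one, sub_add_cancel, Real.rpow_neg (by positivity),
    one_div]
  refine normalizing_constant_identity (Real.one_lt_rpow hp1 hα0) (inv_lt_one_of_one_lt₀ hp1) ?_
  rw [← hpα]
  exact Real.rpow_lt_one_of_one_lt_of_neg hp1 (by linarith)
end

section
/- Let p be a prime and τ ∈ ℚ_p nonzero with |τ|_p < 1. Then the integral of |ξ|_p^{-2}·(log|ξ + τ|_p − log|τ|_p) over {ξ ∈ ℚ_p : |ξ|_p ≥ 1} with respect to the normalized Haar measure equals (log p)/(p − 1) − log|τ|_p. -/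
/-!
The domain `1 ≤ ‖ξ‖` is the disjoint union of the spheres `‖ξ‖ = p ^ n`, `n ≥ 0`. On each of them
`‖ξ + τ‖ = ‖ξ‖` by the ultrametric inequality, so the integrand is the constant
`p ^ (-2n) (n log p - log ‖τ‖)`, while the sphere has measure `p ^ n - p ^ (n - 1)`: the ball of
radius `p ^ m` is the disjoint union of `p` translates of the ball of radius `p ^ (m - 1)`, and
`ℤ_[p]` has measure one. The integral is then an arithmetico-geometric series in `1 / p`.
-/

open MeasureTheory Topology Filter

open Metric
open scoped ENNReal

namespace Padic

variable {p : ℕ} [hp : Fact p.Prime]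

lemma exists_lt_norm_sub_mul_zpow_le {x : ℚ_[p]} {m : ℤ} (hx : ‖x‖ ≤ (p : ℝ) ^ m) :
    ∃ a < p, ‖x - a * (p : ℚ_[p]) ^ (-m)‖ ≤ (p : ℝ) ^ (m - 1) := by
  have hp0 : (0 : ℝ) < p := mod_cast hp.out.pos
  have hy : ‖x * (p : ℚ_[p]) ^ m‖ ≤ 1 := by
    rwa [norm_mul, norm_p_zpow, zpow_neg, ← div_eq_mul_inv, div_le_one (by positivity)]
  set y : ℤ_[p] := ⟨x * (p : ℚ_[p]) ^ m, hy⟩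
  refine ⟨y.zmodRepr, y.zmodRepr_lt_p, ?_⟩
  have hya : ‖(y : ℚ_[p]) - y.zmodRepr‖ < 1 := by
    simpa [PadicInt.norm_def] using PadicInt.mem_nonunits.mp y.sub_zmodRepr_mem
  have hpm : (p : ℚ_[p]) ^ m * (p : ℚ_[p]) ^ (-m) = 1 := by
    rw [← zpow_add₀ (by exact_mod_cast hp.out.ne_zero), add_neg_cancel, zpow_zero]
  have hsplit : x - y.zmodRepr * (p : ℚ_[p]) ^ (-m) =
      ((y : ℚ_[p]) - y.zmodRepr) * (p : ℚ_[p]) ^ (-m) := by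
    rw [sub_mul, show (y : ℚ_[p]) = x * (p : ℚ_[p]) ^ m from rfl, mul_assoc, hpm, mul_one]
  rw [hsplit, ← norm_lt_pow_iff_norm_le_pow_sub_one, norm_mul, norm_p_zpow, neg_neg]
  exact mul_lt_of_lt_one_left (by positivity) hya

lemma closedBall_zpow_eq_biUnion (m : ℤ) :
    closedBall (0 : ℚ_[p]) ((p : ℝ) ^ m) =
      ⋃ a ∈ Finset.range p, closedBall (a * (p : ℚ_[p]) ^ (-m)) ((p : ℝ) ^ (m - 1)) := by
  have hp1 : (1 : ℝ) < p := mod_cast hp.out.one_lt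
  ext x
  simp only [Set.mem_iUnion, Finset.mem_range, exists_prop]
  constructor
  · intro hx
    obtain ⟨a, hap, ha⟩ := exists_lt_norm_sub_mul_zpow_le (mem_closedBall_zero_iff.mp hx)
    exact ⟨a, hap, by rwa [mem_closedBall, dist_eq_norm]⟩
  · rintro ⟨a, -, ha⟩
    have hc : (a : ℚ_[p]) * (p : ℚ_[p]) ^ (-m) ∈ closedBall 0 ((p : ℝ) ^ m) := by
      rw [mem_closedBall_zero_iff, norm_mul, norm_p_zpow, neg_neg]
      exact mul_le_of_le_one_left (by positivity) (IsUltrametricDist.norm_natCast_le_one _ a)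
    rw [IsUltrametricDist.closedBall_eq_of_mem hc]
    exact closedBall_subset_closedBall (zpow_le_zpow_right₀ hp1.le (by lia)) ha

lemma norm_natCast_sub_natCast_eq_one_s16 {a b : ℕ} (ha : a < p) (hb : b < p) (hab : a ≠ b) :
    ‖(a : ℚ_[p]) - b‖ = 1 := by
  have hndvd : ¬ (p : ℤ) ∣ (a - b : ℤ) := fun hdvd ↦
    hab (by have := Int.eq_zero_of_dvd_of_natAbs_lt_natAbs hdvd (by lia); lia)
  have := norm_intCast_lt_one_iff.not.mpr hndvd
  push_cast at this
  exact le_antisymm (by exact_mod_cast norm_int_le_one (a - b : ℤ)) (not_lt.mp this)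

lemma pairwiseDisjoint_closedBall_natCast_mul_zpow (m : ℤ) :
    (Finset.range p : Set ℕ).PairwiseDisjoint
      fun a : ℕ ↦ closedBall ((a : ℚ_[p]) * (p : ℚ_[p]) ^ (-m)) ((p : ℝ) ^ (m - 1)) := by
  have hp1 : (1 : ℝ) < p := mod_cast hp.out.one_lt
  intro a ha b hb hab
  simp only [Finset.coe_range, Set.mem_Iio] at ha hb
  refine (IsUltrametricDist.closedBall_eq_or_disjoint _ _ _).resolve_left fun heq ↦ ?_
  have hmem := heq ▸ mem_closedBall_self (x := (b : ℚ_[p]) * (p : ℚ_[p]) ^ (-m))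
    (zpow_nonneg (by positivity) (m - 1))
  rw [mem_closedBall, dist_eq_norm, ← sub_mul, norm_mul, norm_p_zpow, neg_neg,
    norm_natCast_sub_natCast_eq_one_s16 hb ha (Ne.symm hab), one_mul] at hmem
  exact (zpow_lt_zpow_right₀ hp1 (by lia : m - 1 < m)).not_ge hmem

lemma addHaar_closedBall_zpow_eq_mul (μ : Measure ℚ_[p]) [μ.IsAddHaarMeasure] (m : ℤ) :
    μ (closedBall 0 ((p : ℝ) ^ m)) = p * μ (closedBall 0 ((p : ℝ) ^ (m - 1))) := by
  rw [closedBall_zpow_eq_biUnion, measure_biUnion_finset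
    (pairwiseDisjoint_closedBall_natCast_mul_zpow m) fun _ _ ↦ measurableSet_closedBall]
  simp only [Measure.addHaar_closedBall_center, Finset.sum_const, Finset.card_range, nsmul_eq_mul]

lemma sphere_zero_zpow_eq_diff (m : ℤ) :
    sphere (0 : ℚ_[p]) ((p : ℝ) ^ m) =
      closedBall 0 ((p : ℝ) ^ m) \ closedBall 0 ((p : ℝ) ^ (m - 1)) := by
  ext x
  simp only [mem_sphere_zero_iff_norm, Set.mem_sdiff, mem_closedBall_zero_iff,
    ← norm_lt_pow_iff_norm_le_pow_sub_one, not_lt, le_antisymm_iff]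

lemma setOf_one_le_norm_eq_iUnion_sphere :
    {x : ℚ_[p] | 1 ≤ ‖x‖} = ⋃ n : ℕ, sphere 0 ((p : ℝ) ^ (n : ℤ)) := by
  have hp1 : (1 : ℝ) < p := mod_cast hp.out.one_lt
  ext x
  simp only [Set.mem_ofPred_eq, Set.mem_iUnion, mem_sphere_zero_iff_norm]
  constructor
  · intro hx
    have hx0 : x ≠ 0 := by rintro rfl; norm_num at hx
    rw [norm_eq_zpow_neg_valuation hx0] at hx ⊢
    exact ⟨(-x.valuation).toNat, by rw [Int.toNat_of_nonneg ((one_le_zpow_iff_right₀ hp1).mp hx)]⟩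
  · rintro ⟨n, hn⟩
    exact hn ▸ one_le_zpow₀ hp1.le (Int.natCast_nonneg n)

end Padic

section padicHaar

variable {p : ℕ} [hp : Fact p.Prime]

instance inst_s16 : (padicHaar p).IsAddHaarMeasure := by
  unfold padicHaar; infer_instance

lemma padicHaar_closedBall_zpow (m : ℤ) :
    padicHaar p (closedBall 0 ((p : ℝ) ^ m)) = ENNReal.ofReal ((p : ℝ) ^ m) := by
  have hp0 : (0 : ℝ) < p := mod_cast hp.out.pos
  have hmul (k : ℤ) :
      (p : ℝ≥0∞) * ENNReal.ofReal ((p : ℝ) ^ (k - 1)) = ENNReal.ofReal ((p : ℝ) ^ k) := by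
    rw [← ENNReal.ofReal_natCast, ← ENNReal.ofReal_mul hp0.le, ← zpow_one_add₀ hp0.ne',
      add_sub_cancel]
  induction m using Int.induction_on with
  | zero =>
    have : closedBall (0 : ℚ_[p]) 1 = padicUnitBall p := by
      ext x; exact mem_closedBall_zero_iff
    simp [this, padicHaar, Measure.addHaarMeasure_self]
  | succ n ih =>
    rw [Padic.addHaar_closedBall_zpow_eq_mul, ← hmul, add_sub_cancel_right, ih]
  | pred n ih =>
    rw [← ENNReal.mul_right_inj (by simpa using hp.out.ne_zero) (ENNReal.natCast_ne_top p),
      ← Padic.addHaar_closedBall_zpow_eq_mul, hmul, ih]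

lemma padicHaar_sphere_zpow (m : ℤ) :
    padicHaar p (sphere 0 ((p : ℝ) ^ m)) = ENNReal.ofReal ((p : ℝ) ^ m - (p : ℝ) ^ (m - 1)) := by
  have hp1 : (1 : ℝ) < p := mod_cast hp.out.one_lt
  rw [Padic.sphere_zero_zpow_eq_diff, measure_sdiff
    (closedBall_subset_closedBall (zpow_le_zpow_right₀ hp1.le (by lia)))
    measurableSet_closedBall.nullMeasurableSet (measure_closedBall_lt_top.ne),
    padicHaar_closedBall_zpow, padicHaar_closedBall_zpow,
    ENNReal.ofReal_sub _ (zpow_nonneg (by positivity) _)]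

lemma integral_setOf_one_le_norm_comp_norm {g : ℝ → ℝ} (hg : Measurable g)
    (hg0 : ∀ n : ℕ, 0 ≤ g ((p : ℝ) ^ (n : ℤ))) :
    ∫ x in {x : ℚ_[p] | 1 ≤ ‖x‖}, g ‖x‖ ∂padicHaar p =
      ∑' n : ℕ, g ((p : ℝ) ^ (n : ℤ)) * ((p : ℝ) ^ (n : ℤ) - (p : ℝ) ^ ((n : ℤ) - 1)) := by
  have hp1 : (1 : ℝ) < p := mod_cast hp.out.one_lt
  set S : ℕ → Set ℚ_[p] := fun n ↦ sphere 0 ((p : ℝ) ^ (n : ℤ))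
  have hS : Pairwise (Function.onFun Disjoint S) := fun a b hab ↦
    Set.disjoint_left.mpr fun x ha hb ↦ hab <| by
      have := (mem_sphere_zero_iff_norm.mp ha).symm.trans (mem_sphere_zero_iff_norm.mp hb)
      exact_mod_cast zpow_right_injective₀ (by positivity) hp1.ne' this
  have hshell (n : ℕ) : 0 ≤ (p : ℝ) ^ (n : ℤ) - (p : ℝ) ^ ((n : ℤ) - 1) :=
    sub_nonneg.mpr (zpow_le_zpow_right₀ hp1.le (by lia))
  have hpiece (n : ℕ) : ∫⁻ x in S n, ENNReal.ofReal (g ‖x‖) ∂padicHaar p =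
      ENNReal.ofReal (g ((p : ℝ) ^ (n : ℤ)) * ((p : ℝ) ^ (n : ℤ) - (p : ℝ) ^ ((n : ℤ) - 1))) := by
    rw [setLIntegral_congr_fun isClosed_sphere.measurableSet fun x hx ↦ by
        rw [mem_sphere_zero_iff_norm.mp hx],
      setLIntegral_const, padicHaar_sphere_zpow, ENNReal.ofReal_mul (hg0 n)]
  have hnonneg : 0 ≤ᵐ[(padicHaar p).restrict (⋃ n, S n)] fun x ↦ g ‖x‖ :=
    ae_restrict_of_forall_mem (.iUnion fun _ ↦ isClosed_sphere.measurableSet) fun x hx ↦ by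
      obtain ⟨n, hn⟩ := Set.mem_iUnion.mp hx
      simpa [mem_sphere_zero_iff_norm.mp hn] using hg0 n
  rw [Padic.setOf_one_le_norm_eq_iUnion_sphere, integral_eq_lintegral_of_nonneg_ae hnonneg
      (hg.comp measurable_norm).aestronglyMeasurable,
    lintegral_iUnion (fun _ ↦ isClosed_sphere.measurableSet) hS, tsum_congr hpiece,
    ENNReal.tsum_toReal_eq fun _ ↦ ENNReal.ofReal_ne_top]
  exact tsum_congr fun n ↦ ENNReal.toReal_ofReal (mul_nonneg (hg0 n) (hshell n))

end padicHaar

lemma hasSum_natCast_mul_sub_mul_geometric {𝕜 : Type*} [NormedField 𝕜] [CompleteSpace 𝕜]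
    (a b : 𝕜) {r : 𝕜} (hr : ‖r‖ < 1) :
    HasSum (fun n : ℕ ↦ (n * a - b) * r ^ n) (a * r / (1 - r) ^ 2 - b / (1 - r)) := by
  rw [show a * r / (1 - r) ^ 2 - b / (1 - r) = r / (1 - r) ^ 2 * a - b * (1 - r)⁻¹ by ring]
  exact (((hasSum_coe_mul_geometric_of_norm_lt_one hr).mul_right a).sub
    ((hasSum_geometric_of_norm_lt_one hr).mul_left b)).congr_fun fun n ↦ by ring

theorem stmt16_general (p : ℕ) [Fact p.Prime] (τ : ℚ_[p]) (hτ : ‖τ‖ < 1) :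
    ∫ ξ in {ξ : ℚ_[p] | 1 ≤ ‖ξ‖},
        ‖ξ‖ ^ (-2 : ℝ) * (Real.log ‖ξ + τ‖ - Real.log ‖τ‖) ∂(padicHaar p)
      = Real.log p / ((p : ℝ) - 1) - Real.log ‖τ‖ := by
  have hp1 : (1 : ℝ) < p := mod_cast (Fact.out : p.Prime).one_lt
  have hp0 : (0 : ℝ) < p := zero_lt_one.trans hp1
  set M := Real.log ‖τ‖
  set g : ℝ → ℝ := fun t ↦ t ^ (-2 : ℝ) * (Real.log t - M)
  have hradial : Set.EqOn (fun ξ : ℚ_[p] ↦ ‖ξ‖ ^ (-2 : ℝ) * (Real.log ‖ξ + τ‖ - M))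
      (fun ξ ↦ g ‖ξ‖) {ξ | 1 ≤ ‖ξ‖} := fun ξ hξ ↦ by
    have hlt : ‖τ‖ < ‖ξ‖ := hτ.trans_le hξ
    simp only [g, IsUltrametricDist.norm_add_eq_max_of_norm_ne_norm hlt.ne', max_eq_left hlt.le]
  have hterm (n : ℕ) : g ((p : ℝ) ^ (n : ℤ)) * ((p : ℝ) ^ (n : ℤ) - (p : ℝ) ^ ((n : ℤ) - 1)) =
      (n * ((1 - (p : ℝ)⁻¹) * Real.log p) - (1 - (p : ℝ)⁻¹) * M) * (p : ℝ)⁻¹ ^ n := by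
    have hpn : (0 : ℝ) < (p : ℝ) ^ n := by positivity
    simp only [g, zpow_natCast, Real.log_pow, zpow_sub_one₀ hp0.ne', inv_pow]
    rw [show (-2 : ℝ) = -(2 : ℕ) by norm_num, Real.rpow_neg hpn.le, Real.rpow_natCast]
    field_simp
  have hg0 (n : ℕ) : 0 ≤ g ((p : ℝ) ^ (n : ℤ)) := by
    have hlog : 0 ≤ Real.log p := Real.log_nonneg hp1.le
    have hM : M ≤ 0 := Real.log_nonpos (norm_nonneg τ) hτ.le
    simp only [g, Real.log_zpow, Int.cast_natCast]
    exact mul_nonneg (Real.rpow_nonneg (by positivity) _)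
      (sub_nonneg.mpr (hM.trans (mul_nonneg n.cast_nonneg hlog)))
  rw [setIntegral_congr_fun (measurableSet_le measurable_const measurable_norm) hradial,
    integral_setOf_one_le_norm_comp_norm (by fun_prop) hg0, tsum_congr hterm,
    (hasSum_natCast_mul_sub_mul_geometric _ _ ?_).tsum_eq]
  · field_simp [(sub_pos.mpr hp1).ne']
  · rw [norm_inv, Real.norm_natCast]
    exact inv_lt_one_of_one_lt₀ hp1

theorem stmt16 (p : ℕ) [Fact p.Prime] (τ : ℚ_[p]) (hτ0 : τ ≠ 0) (hτ : ‖τ‖ < 1) :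
    ∫ ξ in {ξ : ℚ_[p] | 1 ≤ ‖ξ‖},
        ‖ξ‖ ^ (-2 : ℝ) * (Real.log ‖ξ + τ‖ - Real.log ‖τ‖) ∂(padicHaar p)
      = Real.log p / ((p : ℝ) - 1) - Real.log ‖τ‖ :=
  stmt16_general p τ hτ
end
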